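/- Let E and F be real inner product spaces, let r be a positive integer, and let φ : Fin r → E and ψ : Fin r → F be families of vectors. Let M be the Gram matrix of φ in E and let S be the r×r matrix with entries S_{ij} = ⟨φ_j, φ_i⟩_E + ⟨ψ_j, ψ_i⟩_F, and assume S is positive definite. Then for every x ∈ ℝ^r, ‖Σ_{j=1}^r x_j φ_j‖_E ≤ √(‖M‖₂ · ‖S⁻¹‖₂) · (‖Σ_{j=1}^r x_j φ_j‖_E² + ‖Σ_{j=1}^r x_j ψ_j‖_F²)^{1/2}. -/

import Mathlib

open scoped Matrix RealInnerProductSpace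

/-- The spectral norm of a real `r × r` matrix: the operator norm of the matrix
acting on Euclidean space `ℝ^r` with the `ℓ²` norm. -/
noncomputable def matrixSpectralNorm {r : ℕ} (A : Matrix (Fin r) (Fin r) ℝ) : ℝ :=
  ‖Matrix.toEuclideanCLM (𝕜 := ℝ) A‖

/-- The Gram matrix of a family `φ : Fin r → E` in a real inner product space `E`:
the `r × r` real matrix with entries `M i j = ⟪φ j, φ i⟫`. -/
noncomputable def gramMatrix {E : Type*} [NormedAddCommGroup E] [InnerProductSpace ℝ E]
    {r : ℕ} (φ : Fin r → E) : Matrix (Fin r) (Fin r) ℝ :=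
  Matrix.of fun i j => ⟪φ j, φ i⟫

/-- The `H¹`-type Gram matrix of two families `φ : Fin r → E`, `ψ : Fin r → F`:
the `r × r` real matrix with entries `S i j = ⟪φ j, φ i⟫_E + ⟪ψ j, ψ i⟫_F`. -/
noncomputable def sobolevGramMatrix {E F : Type*}
    [NormedAddCommGroup E] [InnerProductSpace ℝ E]
    [NormedAddCommGroup F] [InnerProductSpace ℝ F]
    {r : ℕ} (φ : Fin r → E) (ψ : Fin r → F) : Matrix (Fin r) (Fin r) ℝ :=
  Matrix.of fun i j => ⟪φ j, φ i⟫ + ⟪ψ j, ψ i⟫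

/-! With `v = ∑ x j • φ j` one has `‖v‖² = xᵀ M x ≤ ‖M‖₂ |x|²`, so it suffices that
`|x|² ≤ ‖S⁻¹‖₂ xᵀ S x`, as `xᵀ S x = ‖v‖² + ‖∑ x j • ψ j‖²`. Factor `S = Qᵀ Q` with `Q` invertible:
then `|x| ≤ ‖Q⁻¹‖₂ |Q x|`, `|Q x|² = xᵀ S x`, and the C⋆-identity gives
`‖Q⁻¹‖₂² = ‖Q⁻¹ Q⁻ᵀ‖₂ = ‖S⁻¹‖₂`. -/

open scoped Matrix.Norms.L2Operator MatrixOrder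

lemma matrixSpectralNorm_eq_l2_opNorm {r : ℕ} (A : Matrix (Fin r) (Fin r) ℝ) :
    matrixSpectralNorm A = ‖A‖ :=
  rfl

namespace Matrix

variable {n : Type*} [Fintype n]

lemma norm_toLp_sq_eq_dotProduct (x : n → ℝ) : ‖WithLp.toLp 2 x‖ ^ 2 = x ⬝ᵥ x := by
  rw [← real_inner_self_eq_norm_sq, EuclideanSpace.inner_toLp_toLp, star_trivial]

lemma dotProduct_mulVec_le_l2_opNorm_mul [DecidableEq n] (A : Matrix n n ℝ) (x : n → ℝ) :
    x ⬝ᵥ A *ᵥ x ≤ ‖A‖ * (x ⬝ᵥ x) := by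
  set X : EuclideanSpace ℝ n := WithLp.toLp 2 x
  calc x ⬝ᵥ A *ᵥ x = ⟪X, toEuclideanCLM (𝕜 := ℝ) A X⟫ := (inner_toEuclideanCLM A X X).symm
    _ ≤ ‖X‖ * (‖A‖ * ‖X‖) :=
      (real_inner_le_norm _ _).trans (by gcongr; exact (toEuclideanCLM (𝕜 := ℝ) A).le_opNorm X)
    _ = ‖A‖ * (x ⬝ᵥ x) := by rw [← norm_toLp_sq_eq_dotProduct]; ring

lemma dotProduct_conjTranspose_mul_self_mulVec (Q : Matrix n n ℝ) (x : n → ℝ) :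
    x ⬝ᵥ (Qᴴ * Q) *ᵥ x = (Q *ᵥ x) ⬝ᵥ (Q *ᵥ x) := by
  rw [← mulVec_mulVec, dotProduct_mulVec, conjTranspose_eq_transpose_of_trivial, vecMul_transpose]

lemma dotProduct_self_le_l2_opNorm_inv_mul [DecidableEq n] {S : Matrix n n ℝ} (hS : S.PosDef)
    (x : n → ℝ) :
    x ⬝ᵥ x ≤ ‖S⁻¹‖ * (x ⬝ᵥ S *ᵥ x) := by
  obtain ⟨Q, rfl⟩ := CStarAlgebra.nonneg_iff_eq_star_mul_self.mp hS.posSemidef.nonneg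
  rw [star_eq_conjTranspose] at hS ⊢
  have hQ : IsUnit Q.det := by
    have := hS.det_pos.ne'.isUnit
    rw [det_mul] at this
    exact isUnit_of_mul_isUnit_right this
  have hx : x = Q⁻¹ *ᵥ (Q *ᵥ x) := by rw [mulVec_mulVec, nonsing_inv_mul _ hQ, one_mulVec]
  have hnorm : ‖(Qᴴ * Q)⁻¹‖ = ‖Q⁻¹‖ ^ 2 := by
    rw [mul_inv_rev, ← conjTranspose_nonsing_inv, ← star_eq_conjTranspose,
      CStarRing.norm_self_mul_star, sq]
  have hle : ‖WithLp.toLp 2 x‖ ≤ ‖Q⁻¹‖ * ‖WithLp.toLp 2 (Q *ᵥ x)‖ := by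
    conv_lhs => rw [hx]
    exact l2_opNorm_mulVec Q⁻¹ (WithLp.toLp 2 (Q *ᵥ x))
  rw [hnorm, dotProduct_conjTranspose_mul_self_mulVec, ← norm_toLp_sq_eq_dotProduct,
    ← norm_toLp_sq_eq_dotProduct, ← mul_pow]
  exact pow_le_pow_left₀ (norm_nonneg _) hle 2

end Matrix

section Gram

variable {E F : Type*} [NormedAddCommGroup E] [InnerProductSpace ℝ E]
  [NormedAddCommGroup F] [InnerProductSpace ℝ F] {r : ℕ}

lemma gramMatrix_eq_gram (φ : Fin r → E) : gramMatrix φ = Matrix.gram ℝ φ :=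
  Matrix.ext fun _ _ => real_inner_comm _ _

lemma dotProduct_gramMatrix_mulVec (φ : Fin r → E) (x : Fin r → ℝ) :
    x ⬝ᵥ gramMatrix φ *ᵥ x = ‖∑ j, x j • φ j‖ ^ 2 := by
  rw [gramMatrix_eq_gram, ← real_inner_self_eq_norm_sq, ← Matrix.star_dotProduct_gram_mulVec,
    star_trivial]

lemma dotProduct_sobolevGramMatrix_mulVec (φ : Fin r → E) (ψ : Fin r → F) (x : Fin r → ℝ) :
    x ⬝ᵥ sobolevGramMatrix φ ψ *ᵥ x = ‖∑ j, x j • φ j‖ ^ 2 + ‖∑ j, x j • ψ j‖ ^ 2 := by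
  rw [show sobolevGramMatrix φ ψ = gramMatrix φ + gramMatrix ψ from rfl, Matrix.add_mulVec,
    dotProduct_add, dotProduct_gramMatrix_mulVec, dotProduct_gramMatrix_mulVec]

end Gram

theorem pod_inverse_estimate_L2_le_H1_general
    {E F : Type*} [NormedAddCommGroup E] [InnerProductSpace ℝ E]
    [NormedAddCommGroup F] [InnerProductSpace ℝ F]
    (r : ℕ) (φ : Fin r → E) (ψ : Fin r → F)
    (hSpos : (sobolevGramMatrix φ ψ).PosDef) :
    ∀ x : Fin r → ℝ,
      ‖∑ j, x j • φ j‖ ≤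
        Real.sqrt (matrixSpectralNorm (gramMatrix φ) * matrixSpectralNorm (sobolevGramMatrix φ ψ)⁻¹) *
          Real.sqrt (‖∑ j, x j • φ j‖ ^ 2 + ‖∑ j, x j • ψ j‖ ^ 2) := by
  intro x
  simp only [matrixSpectralNorm_eq_l2_opNorm]
  rw [← Real.sqrt_mul (by positivity)]
  refine Real.le_sqrt_of_sq_le ?_
  calc ‖∑ j, x j • φ j‖ ^ 2 = x ⬝ᵥ gramMatrix φ *ᵥ x := (dotProduct_gramMatrix_mulVec φ x).symm
    _ ≤ ‖gramMatrix φ‖ * (x ⬝ᵥ x) := Matrix.dotProduct_mulVec_le_l2_opNorm_mul _ x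
    _ ≤ ‖gramMatrix φ‖ * (‖(sobolevGramMatrix φ ψ)⁻¹‖ * (x ⬝ᵥ sobolevGramMatrix φ ψ *ᵥ x)) := by
      gcongr
      exact Matrix.dotProduct_self_le_l2_opNorm_inv_mul hSpos x
    _ = ‖gramMatrix φ‖ * ‖(sobolevGramMatrix φ ψ)⁻¹‖ *
          (‖∑ j, x j • φ j‖ ^ 2 + ‖∑ j, x j • ψ j‖ ^ 2) := by
      rw [dotProduct_sobolevGramMatrix_mulVec, mul_assoc]

/-- POD inverse estimate: if `M` is the Gram matrix of `φ` in `E` and `S` the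
(positive definite) matrix `S i j = ⟪φ j, φ i⟫ + ⟪ψ j, ψ i⟫`, then for every `x ∈ ℝ^r`,
`‖∑ x j • φ j‖ ≤ √(‖M‖₂ ‖S⁻¹‖₂) (‖∑ x j • φ j‖² + ‖∑ x j • ψ j‖²)^(1/2)`. -/
theorem pod_inverse_estimate_L2_le_H1
    {E F : Type*} [NormedAddCommGroup E] [InnerProductSpace ℝ E]
    [NormedAddCommGroup F] [InnerProductSpace ℝ F]
    (r : ℕ) (hr : 0 < r) (φ : Fin r → E) (ψ : Fin r → F)
    (hSpos : (sobolevGramMatrix φ ψ).PosDef) :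
    ∀ x : Fin r → ℝ,
      ‖∑ j, x j • φ j‖ ≤
        Real.sqrt (matrixSpectralNorm (gramMatrix φ) * matrixSpectralNorm (sobolevGramMatrix φ ψ)⁻¹) *
          Real.sqrt (‖∑ j, x j • φ j‖ ^ 2 + ‖∑ j, x j • ψ j‖ ^ 2) :=
  pod_inverse_estimate_L2_le_H1_general r φ ψ hSpos
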